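/- Let S be a unital semigroup of partial isometries on a complex Hilbert space H such that the family Q(S) = {T T* : T in S} is commutative, and let T be an element of S. Then every element W of the semigroup S_0 generated by S ∪ {T T*} is a partial isometry, the family Q(S_0) is again a commuting family of projections, and the final projection W W* of every W in S_0 is a finite product of elements of Q(S). -/

import Mathlib

/-!
If `u`, `v` and `u v` are partial isometries, the projections `u⋆u` and `v v⋆` have an idempotent
product, and in a C⋆-algebra this forces them to commute. Let `𝒫` be the monoid generated by
`Q(𝒮)`. Then every `X ∈ 𝒮` is a partial isometry whose initial projection commutes with `𝒫` and
whose conjugation `p ↦ X p X⋆` maps `𝒫` into itself; and so is `T T⋆ ∈ 𝒫`, because `𝒫` is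
commutative. These properties are stable under products, hence hold on all of `𝒮₀`, and then
`W W⋆ = W 1 W⋆ ∈ 𝒫`.
-/

theorem IsStarProjection.commute_of_isIdempotentElem_mul {E : Type*} [NonUnitalNormedRing E]
    [StarRing E] [CStarRing E] {p q : E} (hp : IsStarProjection p) (hq : IsStarProjection q)
    (hpq : IsIdempotentElem (p * q)) : Commute p q := by
  have sp := hp.isSelfAdjoint.star_eq
  have sq := hq.isSelfAdjoint.star_eq
  have hpp : p * p = p := hp.isIdempotentElem
  have hqq : q * q = q := hq.isIdempotentElem
  have hpqpq : p * q * (p * q) = p * q := hpq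
  -- each product `p q ⋯ p` collapses to `p q p`, whence `x x⋆ = 0` for `x = p q - p q p`
  have hx : (p * q - p * q * p) * star (p * q - p * q * p) = 0 := by
    have h1 : p * q * (q * p) = p * q * p := by rw [← mul_assoc, mul_assoc p, hqq]
    have h2 : p * q * (p * q * p) = p * q * p := by rw [← mul_assoc, hpqpq]
    have h3 : p * q * p * (q * p) = p * q * p := by
      rw [mul_assoc, ← mul_assoc p, ← mul_assoc, hpqpq]
    have h4 : p * q * p * (p * q * p) = p * q * p := by
      rw [mul_assoc (p * q) p, ← mul_assoc p (p * q) p, ← mul_assoc p p q, hpp, h2]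
    simp only [star_sub, star_mul, sp, sq, mul_sub, sub_mul, h1, h2, ← mul_assoc p q p, h3, h4]
    abel
  have hpqp : p * q = p * q * p := sub_eq_zero.mp ((CStarRing.mul_star_self_eq_zero_iff _).mp hx)
  calc p * q = p * q * p := hpqp
    _ = star (p * q * p) := by simp only [star_mul, sp, sq, mul_assoc]
    _ = star (p * q) := by rw [← hpqp]
    _ = q * p := by rw [star_mul, sp, sq]

def IsPartialIsometry {M : Type*} [Mul M] [Star M] (v : M) : Prop := v * star v * v = v

namespace IsPartialIsometry

variable {M : Type*} [Monoid M] [StarMul M] {u v a p : M}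

theorem star_mul_mul_star (hv : IsPartialIsometry v) : star v * v * star v = star v := by
  simpa only [star_mul, star_star, mul_assoc] using congrArg star hv

theorem isStarProjection_mul_star (hv : IsPartialIsometry v) : IsStarProjection (v * star v) :=
  ⟨by rw [IsIdempotentElem, ← mul_assoc, hv], .mul_star_self v⟩

theorem isStarProjection_star_mul (hv : IsPartialIsometry v) : IsStarProjection (star v * v) :=
  ⟨by rw [IsIdempotentElem, ← mul_assoc, hv.star_mul_mul_star], .star_mul_self v⟩

protected theorem mul (hu : IsPartialIsometry u) (hv : IsPartialIsometry v)
    (h : Commute (star u * u) (v * star v)) : IsPartialIsometry (u * v) :=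
  calc u * v * star (u * v) * (u * v) = u * (v * star v * (star u * u)) * v := by
        simp only [star_mul, mul_assoc]
    _ = u * (star u * u * (v * star v)) * v := by rw [h.eq]
    _ = u * star u * u * (v * star v * v) := by simp only [mul_assoc]
    _ = u * v := by rw [hu, hv]

theorem conj_mul_of_commute (hv : IsPartialIsometry v) (ha : Commute (star v * v) a) (b : M) :
    v * (a * b) * star v = v * a * star v * (v * b * star v) :=
  calc v * (a * b) * star v = v * (star v * v * a) * b * star v := by
        nth_rewrite 1 [← hv]; simp only [mul_assoc]
    _ = v * (a * (star v * v)) * b * star v := by rw [ha.eq]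
    _ = v * a * star v * (v * b * star v) := by simp only [mul_assoc]

theorem commute_star_mul_mul (hv : IsPartialIsometry v) (hvp : Commute (star v * v) p)
    (ha : Commute a (v * p * star v)) : Commute (star v * a * v) p := by
  have hleft : v * p = v * p * star v * v :=
    calc v * p = v * (star v * v * p) := by nth_rewrite 1 [← hv]; simp only [mul_assoc]
      _ = v * (p * (star v * v)) := by rw [hvp.eq]
      _ = v * p * star v * v := by simp only [mul_assoc]
  have hright : star v * (v * p * star v) = p * star v := by
    rw [← mul_assoc, ← mul_assoc, hvp.eq, mul_assoc, hv.star_mul_mul_star]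
  show star v * a * v * p = p * (star v * a * v)
  calc star v * a * v * p = star v * a * (v * p * star v * v) := by
        rw [mul_assoc _ v p, ← hleft]
    _ = star v * (a * (v * p * star v)) * v := by simp only [mul_assoc]
    _ = star v * (v * p * star v) * a * v := by rw [ha.eq]; simp only [mul_assoc]
    _ = p * (star v * a * v) := by rw [hright]; simp only [mul_assoc]

end IsPartialIsometry

section Monoid

variable {M : Type*} [Monoid M] [StarMul M]

def partialIsometryNormalizer (P : Submonoid M) : Subsemigroup M where
  carrier := {w | IsPartialIsometry w ∧ (∀ p ∈ P, w * p * star w ∈ P) ∧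
    ∀ p ∈ P, Commute (star w * w) p}
  mul_mem' := by
    rintro u v ⟨hu, huP, huc⟩ ⟨hv, hvP, hvc⟩
    have hvv : v * star v ∈ P := by simpa using hvP 1 P.one_mem
    refine ⟨hu.mul hv (huc _ hvv), fun p hp => ?_, fun p hp => ?_⟩
    · simpa only [star_mul, mul_assoc] using huP _ (hvP p hp)
    · simpa only [star_mul, mul_assoc] using
        hv.commute_star_mul_mul (hvc p hp) (huc _ (hvP p hp))

theorem mem_partialIsometryNormalizer_of_isStarProjection {P : Submonoid M}
    (hP : ∀ a ∈ P, ∀ b ∈ P, Commute a b) {p : M} (hp : p ∈ P) (hproj : IsStarProjection p) :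
    p ∈ partialIsometryNormalizer P := by
  have sp : star p = p := hproj.isSelfAdjoint.star_eq
  have hpp : p * p = p := hproj.isIdempotentElem
  refine ⟨by rw [IsPartialIsometry, sp, hpp, hpp], fun r hr => ?_, fun r hr => ?_⟩
  · rw [sp, mul_assoc, ← (hP p hp r hr).eq, ← mul_assoc, hpp]
    exact mul_mem hp hr
  · rw [sp, hpp]
    exact hP p hp r hr

def finalProjectionMonoid (S : Set M) : Submonoid M :=
  Submonoid.closure ((fun X => X * star X) '' S)

theorem commute_of_mem_finalProjectionMonoid {S : Set M}
    (hQcomm : ∀ A ∈ S, ∀ B ∈ S, Commute (A * star A) (B * star B)) :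
    ∀ a ∈ finalProjectionMonoid S, ∀ b ∈ finalProjectionMonoid S, Commute a b := by
  have hle := Submonoid.closure_le_centralizer_centralizer ((fun X => X * star X) '' S)
  refine fun a ha b hb => Set.centralizer_centralizer_comm_of_comm ?_ a (hle ha) b (hle hb)
  rintro _ ⟨A, hA, rfl⟩ _ ⟨B, hB, rfl⟩
  exact hQcomm A hA B hB

theorem mul_star_mem_finalProjectionMonoid {S : Set M} {X : M} (hX : X ∈ S) :
    X * star X ∈ finalProjectionMonoid S :=
  Submonoid.subset_closure ⟨X, hX, rfl⟩

end Monoid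

section CStarRing

variable {E : Type*} [NormedRing E] [StarRing E] [CStarRing E]

theorem IsPartialIsometry.commute_star_mul_self_mul_star_self {u v : E}
    (hu : IsPartialIsometry u) (hv : IsPartialIsometry v) (huv : IsPartialIsometry (u * v)) :
    Commute (star u * u) (v * star v) := by
  refine hu.isStarProjection_star_mul.commute_of_isIdempotentElem_mul
    hv.isStarProjection_mul_star ?_
  calc star u * u * (v * star v) * (star u * u * (v * star v))
        = star u * (u * v * star (u * v) * (u * v)) * star v := by
        simp only [star_mul, mul_assoc]
    _ = star u * u * (v * star v) := by rw [huv]; simp only [mul_assoc]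

variable {S : Set E} (hmul : ∀ A ∈ S, ∀ B ∈ S, A * B ∈ S) (hpi : ∀ A ∈ S, IsPartialIsometry A)
include hmul hpi

theorem commute_star_mul_self_of_mem_finalProjectionMonoid {X : E} (hX : X ∈ S) {p : E}
    (hp : p ∈ finalProjectionMonoid S) : Commute (star X * X) p := by
  have hle : finalProjectionMonoid S ≤ Submonoid.centralizer {star X * X} := by
    refine Submonoid.closure_le.2 ?_
    rintro _ ⟨B, hB, rfl⟩
    rw [SetLike.mem_coe, Submonoid.mem_centralizer_iff]
    rintro _ rfl
    exact (hpi X hX).commute_star_mul_self_mul_star_self (hpi B hB) (hpi _ (hmul X hX B hB))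
  exact Submonoid.mem_centralizer_iff.1 (hle hp) _ rfl

theorem conj_mem_finalProjectionMonoid {X : E} (hX : X ∈ S) {p : E}
    (hp : p ∈ finalProjectionMonoid S) : X * p * star X ∈ finalProjectionMonoid S := by
  induction hp using Submonoid.closure_induction with
  | mem q hq =>
    obtain ⟨B, hB, rfl⟩ := hq
    simpa only [star_mul, mul_assoc] using mul_star_mem_finalProjectionMonoid (hmul X hX B hB)
  | one => simpa using mul_star_mem_finalProjectionMonoid hX
  | mul a b ha _ hXa hXb =>
    rw [(hpi X hX).conj_mul_of_commute
      (commute_star_mul_self_of_mem_finalProjectionMonoid hmul hpi hX ha)]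
    exact mul_mem hXa hXb

theorem subset_partialIsometryNormalizer :
    S ⊆ partialIsometryNormalizer (finalProjectionMonoid S) := fun _ hX =>
  ⟨hpi _ hX, fun _ => conj_mem_finalProjectionMonoid hmul hpi hX,
    fun _ => commute_star_mul_self_of_mem_finalProjectionMonoid hmul hpi hX⟩

end CStarRing

theorem semigroup_adjoin_final_projection_general {H : Type*} [NormedAddCommGroup H]
    [InnerProductSpace ℂ H] [CompleteSpace H] (𝒮 : Set (H →L[ℂ] H))
    (hmul : ∀ A ∈ 𝒮, ∀ B ∈ 𝒮, A * B ∈ 𝒮)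
    (hpi : ∀ A ∈ 𝒮, A * star A * A = A)
    (hQcomm : ∀ A ∈ 𝒮, ∀ B ∈ 𝒮,
      (A * star A) * (B * star B) = (B * star B) * (A * star A))
    (T : H →L[ℂ] H) (hT : T ∈ 𝒮) :
    (∀ W ∈ Subsemigroup.closure (𝒮 ∪ {T * star T}), W * star W * W = W) ∧
    (∀ W ∈ Subsemigroup.closure (𝒮 ∪ {T * star T}),
      ∃ l : List (H →L[ℂ] H), (∀ x ∈ l, ∃ X ∈ 𝒮, x = X * star X) ∧
        W * star W = l.prod) ∧
    (∀ W ∈ Subsemigroup.closure (𝒮 ∪ {T * star T}),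
      ∀ W' ∈ Subsemigroup.closure (𝒮 ∪ {T * star T}),
        (W * star W) * (W' * star W') = (W' * star W') * (W * star W)) := by
  set P := finalProjectionMonoid 𝒮
  have hP := commute_of_mem_finalProjectionMonoid hQcomm
  have hle : Subsemigroup.closure (𝒮 ∪ {T * star T}) ≤ partialIsometryNormalizer P :=
    Subsemigroup.closure_le.2 <| Set.union_subset (subset_partialIsometryNormalizer hmul hpi)
      (Set.singleton_subset_iff.2 <|
        mem_partialIsometryNormalizer_of_isStarProjection hP (mul_star_mem_finalProjectionMonoid hT)
          (IsPartialIsometry.isStarProjection_mul_star (hpi T hT)))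
  have hfinal : ∀ W ∈ Subsemigroup.closure (𝒮 ∪ {T * star T}), W * star W ∈ P := fun W hW => by
    simpa using (hle hW).2.1 1 P.one_mem
  refine ⟨fun W hW => (hle hW).1, fun W hW => ?_,
    fun W hW W' hW' => hP _ (hfinal W hW) _ (hfinal W' hW')⟩
  obtain ⟨l, hl, hprod⟩ := Submonoid.exists_list_of_mem_closure (hfinal W hW)
  refine ⟨l, fun x hx => ?_, hprod.symm⟩
  obtain ⟨X, hX, rfl⟩ := hl x hx
  exact ⟨X, hX, rfl⟩

/-- Proposition 2.3: let `𝒮` be a unital semigroup of partial isometries with `Q(𝒮)`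
commutative and let `T ∈ 𝒮`. Then every element `W` of the semigroup `𝒮₀` generated by
`𝒮 ∪ {T T*}` is a partial isometry, its final projection `W W*` is a finite product of
elements of `Q(𝒮)`, and the final projections of elements of `𝒮₀` commute with one
another. -/
theorem semigroup_adjoin_final_projection {H : Type*} [NormedAddCommGroup H]
    [InnerProductSpace ℂ H] [CompleteSpace H] (𝒮 : Set (H →L[ℂ] H))
    (hmul : ∀ A ∈ 𝒮, ∀ B ∈ 𝒮, A * B ∈ 𝒮)
    (hone : (1 : H →L[ℂ] H) ∈ 𝒮)
    (hpi : ∀ A ∈ 𝒮, A * star A * A = A)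
    (hQcomm : ∀ A ∈ 𝒮, ∀ B ∈ 𝒮,
      (A * star A) * (B * star B) = (B * star B) * (A * star A))
    (T : H →L[ℂ] H) (hT : T ∈ 𝒮) :
    (∀ W ∈ Subsemigroup.closure (𝒮 ∪ {T * star T}), W * star W * W = W) ∧
    (∀ W ∈ Subsemigroup.closure (𝒮 ∪ {T * star T}),
      ∃ l : List (H →L[ℂ] H), (∀ x ∈ l, ∃ X ∈ 𝒮, x = X * star X) ∧
        W * star W = l.prod) ∧
    (∀ W ∈ Subsemigroup.closure (𝒮 ∪ {T * star T}),
      ∀ W' ∈ Subsemigroup.closure (𝒮 ∪ {T * star T}),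
        (W * star W) * (W' * star W') = (W' * star W') * (W * star W)) :=
  semigroup_adjoin_final_projection_general 𝒮 hmul hpi hQcomm T hT
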